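/- For every natural number n, Σ_{i=0}^{n} C(n, i) · L_{2i} equals 5^k · L_n if n = 2k is even, and equals 5^{k+1} · F_n if n = 2k+1 is odd, where L_m and F_m denote the m-th Lucas and Fibonacci numbers respectively. -/
import Mathlib


/-- The Lucas numbers: `L 0 = 2`, `L 1 = 1`, `L (n+2) = L (n+1) + L n`. -/
def lucas : ℕ → ℕ
  | 0 => 2
  | 1 => 1
  | n + 2 => lucas (n + 1) + lucas n

lemma lucas_fib : ∀ n, lucas (n + 1) = Nat.fib n + Nat.fib (n + 2)
  | 0 => by decide
  | 1 => by decide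
  | n + 2 => by
      have h1 := lucas_fib n
      have h2 := lucas_fib (n + 1)
      show lucas (n + 1 + 2) = _
      rw [lucas, h1, h2]
      simp [Nat.fib_add_two]
      ring

lemma fib_add_lucas (n : ℕ) : Nat.fib n + Nat.fib (n + 2) = lucas (n + 1) :=
  (lucas_fib n).symm

lemma lucas_add_five (n : ℕ) : lucas n + lucas (n + 2) = 5 * Nat.fib (n + 1) := by
  cases n with
  | zero => decide
  | succ m =>
      rw [lucas_fib m, lucas_fib (m + 2)]
      have h1 : Nat.fib (m + 2) = Nat.fib m + Nat.fib (m + 1) := Nat.fib_add_two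
      have h2 : Nat.fib (m + 1 + 2) = Nat.fib (m + 1) + Nat.fib (m + 1 + 1) := Nat.fib_add_two
      have h3 : Nat.fib (m + 2 + 2) = Nat.fib (m + 2) + Nat.fib (m + 2 + 1) := Nat.fib_add_two
      simp only [show m + 1 + 2 = m + 3 from rfl, show m + 1 + 1 = m + 2 from rfl,
        show m + 2 + 2 = m + 4 from rfl, show m + 2 + 1 = m + 3 from rfl] at h2 h3 ⊢
      omega

lemma pascal_sum (f : ℕ → ℕ) (n : ℕ) :
    ∑ i ∈ Finset.range (n + 2), (n + 1).choose i * f i =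
      ∑ i ∈ Finset.range (n + 1), n.choose i * f i +
      ∑ i ∈ Finset.range (n + 1), n.choose i * f (i + 1) := by
  have hL : ∑ i ∈ Finset.range (n + 2), (n + 1).choose i * f i =
      f 0 + ∑ i ∈ Finset.range (n + 1), (n.choose i + n.choose (i + 1)) * f (i + 1) := by
    rw [Finset.sum_range_succ' (fun i => (n + 1).choose i * f i)]
    simp [Nat.choose_succ_succ, add_comm]
  have hR : ∑ i ∈ Finset.range (n + 1), n.choose i * f i =
      f 0 + ∑ i ∈ Finset.range n, n.choose (i + 1) * f (i + 1) := by
    rw [Finset.sum_range_succ' (fun i => n.choose i * f i)]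
    simp [add_comm]
  have hext : ∑ i ∈ Finset.range (n + 1), n.choose (i + 1) * f (i + 1) =
      ∑ i ∈ Finset.range n, n.choose (i + 1) * f (i + 1) := by
    rw [Finset.sum_range_succ]
    simp [Nat.choose_succ_self]
  rw [hL, hR]
  simp only [add_mul, Finset.sum_add_distrib]
  rw [← hext]
  ring

lemma key (n : ℕ) : ∀ m k : ℕ,
    (n = 2 * k →
      ∑ i ∈ Finset.range (n + 1), Nat.choose n i * lucas (2 * i + m) = 5 ^ k * lucas (n + m)) ∧
    (n = 2 * k + 1 →
      ∑ i ∈ Finset.range (n + 1), Nat.choose n i * lucas (2 * i + m) = 5 ^ (k + 1) * Nat.fib (n + m)) := by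
  induction n with
  | zero =>
      intro m k
      constructor
      · intro hk
        have : k = 0 := by omega
        subst this
        simp
      · intro hk; omega
  | succ n ih =>
      intro m k
      have hps : ∑ i ∈ Finset.range (n + 2), (n + 1).choose i * lucas (2 * i + m) =
          ∑ i ∈ Finset.range (n + 1), n.choose i * lucas (2 * i + m) +
          ∑ i ∈ Finset.range (n + 1), n.choose i * lucas (2 * i + (m + 2)) := by
        have := pascal_sum (fun i => lucas (2 * i + m)) n
        convert this using 2
        congr 1
        ext i
        congr 1
        ring
      constructor
      · intro hk
        -- n + 1 = 2 * k, so n = 2 * (k-1) + 1, k ≥ 1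
        obtain ⟨k', rfl⟩ : ∃ k', k = k' + 1 := ⟨k - 1, by omega⟩
        have hn : n = 2 * k' + 1 := by omega
        have h1 := (ih m k').2 hn
        have h2 := (ih (m + 2) k').2 hn
        rw [hps, h1, h2, ← Nat.mul_add]
        have : Nat.fib (n + m) + Nat.fib (n + (m + 2)) = lucas (n + m + 1) := by
          have := fib_add_lucas (n + m)
          convert this using 3 <;> ring
        rw [this]
        congr 1
        ring
      · intro hk
        have hn : n = 2 * k := by omega
        have h1 := (ih m k).1 hn
        have h2 := (ih (m + 2) k).1 hn
        rw [hps, h1, h2, ← Nat.mul_add]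
        have : lucas (n + m) + lucas (n + (m + 2)) = 5 * Nat.fib (n + m + 1) := by
          have := lucas_add_five (n + m)
          convert this using 3 <;> ring
        rw [this]
        have : n + 1 + m = n + m + 1 := by ring
        rw [this, ← mul_assoc, pow_succ]

theorem stmt_19 (n : ℕ) :
    ∀ k : ℕ,
      (n = 2 * k →
        ∑ i ∈ Finset.range (n + 1), Nat.choose n i * lucas (2 * i) = 5 ^ k * lucas n) ∧
      (n = 2 * k + 1 →
        ∑ i ∈ Finset.range (n + 1), Nat.choose n i * lucas (2 * i) = 5 ^ (k + 1) * Nat.fib n) := by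
  intro k
  have h := key n 0 k
  simpa using h
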